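/- arXiv:q-bio/0603034 — 3 statements merged into one kernel-verified Lean document; each statement's English description precedes it below -/
import Mathlib

section
/- For the genotype space G = {000, 011, 100, 101, 110, 111} ⊆ {0,1}^3, the two linear forms x = w_{100} + w_{111} − w_{101} − w_{110} and y = w_{000} + w_{111} − w_{011} − w_{100} vanish on every landscape w : G → ℝ that extends to an affine-linear function on ℝ^3, and together they span the space of all linear forms on ℝ^G vanishing on such landscapes (which has dimension 2 = |G| − dim Π_G − 1). -/
/-- The linear form `x = w₁₀₀ + w₁₁₁ − w₁₀₁ − w₁₁₀`, with genotypes ordered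
`000, 011, 100, 101, 110, 111`. -/
noncomputable def proj6 (i : Fin 6) : Module.Dual ℝ (Fin 6 → ℝ) :=
  LinearMap.proj i

noncomputable def Xform : Module.Dual ℝ (Fin 6 → ℝ) :=
  proj6 2 + proj6 5 - proj6 3 - proj6 4

/-- The linear form `y = w₀₀₀ + w₁₁₁ − w₀₁₁ − w₁₀₀`. -/
noncomputable def Yform : Module.Dual ℝ (Fin 6 → ℝ) :=
  proj6 0 + proj6 5 - proj6 1 - proj6 2

/-! A linear form vanishes on all affine landscapes iff it kills the constant landscape and
the three coordinate landscapes `k ↦ (g_k)_i`. For `G` these are four independent linear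
conditions on the six coefficients of the form, whose solutions are exactly the combinations
of `x` and `y`; and `x`, `y` are independent, as their values at `e₀` and `e₂` show. -/

def affineLandscapes {ι n : Type*} [Fintype n] (g : ι → n → ℝ) : Set (ι → ℝ) :=
  {w | ∃ (a : n → ℝ) (b : ℝ), ∀ k, w k = (∑ i, a i * g k i) + b}

theorem forall_affineLandscapes_dual_eq_zero_iff {ι n : Type*} [Fintype n] [DecidableEq n]
    (g : ι → n → ℝ) (φ : Module.Dual ℝ (ι → ℝ)) :
    (∀ w ∈ affineLandscapes g, φ w = 0) ↔ φ 1 = 0 ∧ ∀ i, φ (fun k => g k i) = 0 := by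
  constructor
  · intro h
    refine ⟨h 1 ⟨0, 1, fun k => by simp⟩, fun i => h _ ⟨Pi.single i 1, 0, fun k => ?_⟩⟩
    simp [Pi.single_apply]
  · rintro ⟨h1, hg⟩ w ⟨a, b, hw⟩
    have hw' : w = b • 1 + ∑ i, a i • fun k => g k i := by
      funext k
      simp [hw k, Finset.sum_apply, add_comm]
    simp [hw', h1, hg]

theorem dual_apply_eq_sum {ι : Type*} [Fintype ι] [DecidableEq ι]
    (φ : Module.Dual ℝ (ι → ℝ)) (w : ι → ℝ) : φ w = ∑ i, w i * φ (Pi.single i 1) := by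
  rw [LinearMap.pi_apply_eq_sum_univ]
  refine Finset.sum_congr rfl fun i _ => ?_
  rw [smul_eq_mul]
  congr 2
  funext j
  simp [Pi.single_apply, eq_comm]

def genotypes : Fin 6 → Fin 3 → ℝ :=
  ![![0,0,0], ![0,1,1], ![1,0,0], ![1,0,1], ![1,1,0], ![1,1,1]]

theorem Xform_eq_zero_of_mem_affineLandscapes :
    ∀ w ∈ affineLandscapes genotypes, Xform w = 0 := by
  rw [forall_affineLandscapes_dual_eq_zero_iff]
  simp [Xform, proj6, genotypes, Fin.forall_fin_succ]

theorem Yform_eq_zero_of_mem_affineLandscapes :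
    ∀ w ∈ affineLandscapes genotypes, Yform w = 0 := by
  rw [forall_affineLandscapes_dual_eq_zero_iff]
  simp [Yform, proj6, genotypes, Fin.forall_fin_succ]

theorem mem_span_Xform_Yform {φ : Module.Dual ℝ (Fin 6 → ℝ)}
    (hφ : ∀ w ∈ affineLandscapes genotypes, φ w = 0) :
    φ ∈ Submodule.span ℝ ({Xform, Yform} : Set (Module.Dual ℝ (Fin 6 → ℝ))) := by
  obtain ⟨h1, hg⟩ := (forall_affineLandscapes_dual_eq_zero_iff genotypes φ).1 hφ
  have hg0 := hg 0
  have hg1 := hg 1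
  have hg2 := hg 2
  rw [dual_apply_eq_sum φ] at h1 hg0 hg1 hg2
  obtain ⟨c, hc⟩ : ∃ c : Fin 6 → ℝ, ∀ i, φ (Pi.single i 1) = c i := ⟨_, fun _ => rfl⟩
  simp [Fin.sum_univ_six, genotypes, hc] at h1 hg0 hg1 hg2
  have hc1 : c 1 = -c 0 := by linarith
  have hc3 : c 3 = c 0 - c 5 := by linarith
  have hc4 : c 4 = c 0 - c 5 := by linarith
  have hc2 : c 2 = c 5 - 2 * c 0 := by linarith
  rw [Submodule.mem_span_pair]
  -- `x` and `y` take the values `0, 1` at `e₀` and `1, 1` at `e₅`.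
  refine ⟨c 5 - c 0, c 0, LinearMap.ext fun w => ?_⟩
  simp only [dual_apply_eq_sum φ w, hc, Fin.sum_univ_six, hc1, hc2, hc3, hc4, Xform, Yform, proj6,
    LinearMap.add_apply, LinearMap.sub_apply, LinearMap.smul_apply, LinearMap.proj_apply, smul_eq_mul]
  ring

theorem linearIndependent_Xform_Yform : LinearIndependent ℝ ![Xform, Yform] := by
  rw [LinearIndependent.pair_iff]
  intro s t hst
  have h0 := LinearMap.congr_fun hst (Pi.single 0 1)
  have h2 := LinearMap.congr_fun hst (Pi.single 2 1)
  simp [Xform, Yform, proj6] at h0 h2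
  constructor <;> linarith

/-- For `G = {000, 011, 100, 101, 110, 111}`, the forms `x` and `y` vanish on every
affine-linear landscape, and they span the space of all linear forms vanishing on such
landscapes, which is 2-dimensional. -/
theorem stmt14 :
    let gs : Fin 6 → Fin 3 → ℝ :=
      ![![0,0,0], ![0,1,1], ![1,0,0], ![1,0,1], ![1,1,0], ![1,1,1]]
    let L : Set (Fin 6 → ℝ) :=
      {w | ∃ (a : Fin 3 → ℝ) (b : ℝ), ∀ k, w k = (∑ i, a i * gs k i) + b}
    (∀ w ∈ L, Xform w = 0 ∧ Yform w = 0) ∧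
    (∀ φ : Module.Dual ℝ (Fin 6 → ℝ), (∀ w ∈ L, φ w = 0) →
      φ ∈ Submodule.span ℝ ({Xform, Yform} : Set (Module.Dual ℝ (Fin 6 → ℝ)))) ∧
    Module.finrank ℝ
      (Submodule.span ℝ ({Xform, Yform} : Set (Module.Dual ℝ (Fin 6 → ℝ)))) = 2 := by
  intro gs L
  refine ⟨fun w hw => ⟨Xform_eq_zero_of_mem_affineLandscapes w hw,
    Yform_eq_zero_of_mem_affineLandscapes w hw⟩, fun φ => mem_span_Xform_Yform, ?_⟩
  rw [← Matrix.range_cons_cons_empty, finrank_span_eq_card linearIndependent_Xform_Yform]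
  simp
end

section
/- Suppose w : G → ℝ satisfies a circuit inequality Σ_{g ∈ G_1} α_g w_g > Σ_{g ∈ G_2} β_g w_g, where G_1, G_2 ⊆ G are disjoint, α_g, β_g > 0, Σ α_g = Σ β_g = 1, and Σ_{g∈G_1} α_g ρ(δ_g) = Σ_{g∈G_2} β_g ρ(δ_g) (both convex combinations give the same allele frequency point). Then no population p ∈ Δ_G maximizing p · w subject to ρ(p) = v can have p_g > 0 for all g ∈ G_2: the genotypes in G_2 cannot all coexist in a fittest population. -/
/-- If a fitness landscape satisfies a circuit inequality
`Σ_{g∈G₁} α_g w_g > Σ_{g∈G₂} β_g w_g` between two disjoint sets of genotypes whose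
convex combinations give the same allele-frequency point, then in any fittest population
for its allele frequencies the genotypes of `G₂` cannot all be present. -/
theorem stmt17 (Sigma : Type*) [Fintype Sigma] [DecidableEq Sigma] (n : ℕ)
    (G : Type*) [Fintype G] [DecidableEq G] (geno : G → Fin n → Sigma) (w : G → ℝ)
    (ρ : (G → ℝ) → (Fin n → Sigma → ℝ))
    (hρ : ρ = fun p i τ => ∑ g, if geno g i = τ then p g else 0)
    (G₁ G₂ : Finset G) (hdisj : Disjoint G₁ G₂)
    (α β : G → ℝ) (hα : ∀ g ∈ G₁, 0 < α g) (hβ : ∀ g ∈ G₂, 0 < β g)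
    (hα1 : ∑ g ∈ G₁, α g = 1) (hβ1 : ∑ g ∈ G₂, β g = 1)
    (hmarg : ∑ g ∈ G₁, α g • ρ (fun h => if h = g then 1 else 0)
           = ∑ g ∈ G₂, β g • ρ (fun h => if h = g then 1 else 0))
    (hcirc : ∑ g ∈ G₂, β g * w g < ∑ g ∈ G₁, α g * w g)
    (v : Fin n → Sigma → ℝ) (p : G → ℝ)
    (hp0 : ∀ g, 0 ≤ p g) (hp1 : ∑ g, p g = 1) (hpv : ρ p = v)
    (hmax : ∀ q : G → ℝ, (∀ g, 0 ≤ q g) → ∑ g, q g = 1 → ρ q = v →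
      ∑ g, q g * w g ≤ ∑ g, p g * w g) :
    ¬ ∀ g ∈ G₂, 0 < p g := by
  intro hall
  rcases G₂.eq_empty_or_nonempty with hne | hne
  · rw [hne] at hβ1; simp at hβ1
  obtain ⟨g₀, hg₀, hmin⟩ := G₂.exists_min_image (fun g => p g / β g) hne
  set ε := p g₀ / β g₀ with hε
  have hεpos : 0 < ε := div_pos (hall g₀ hg₀) (hβ g₀ hg₀)
  set q : G → ℝ := fun g => p g + ε * (if g ∈ G₁ then α g else 0)
      - ε * (if g ∈ G₂ then β g else 0) with hqdef
  have hdisj' : ∀ g ∈ G₂, g ∉ G₁ := fun g hg2 hg1 =>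
    (Finset.disjoint_left.mp hdisj hg1) hg2
  have hq0 : ∀ g, 0 ≤ q g := by
    intro g
    by_cases h2 : g ∈ G₂
    · have h1 : g ∉ G₁ := hdisj' g h2
      have hle : ε * β g ≤ p g := by
        have hm := hmin g h2
        have hb := hβ g h2
        calc ε * β g ≤ (p g / β g) * β g :=
              mul_le_mul_of_nonneg_right hm (le_of_lt hb)
          _ = p g := div_mul_cancel₀ _ (ne_of_gt hb)
      simp only [hqdef, if_neg h1, if_pos h2, mul_zero, add_zero]
      linarith
    · have hge : 0 ≤ ε * (if g ∈ G₁ then α g else 0) := by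
        by_cases h1 : g ∈ G₁
        · rw [if_pos h1]; exact le_of_lt (mul_pos hεpos (hα g h1))
        · simp [h1]
      simp only [hqdef, if_neg h2, mul_zero, sub_zero]
      have := hp0 g; linarith
  have e1 : ∑ g, (if g ∈ G₁ then α g else 0) = 1 := by
    rw [Finset.sum_ite_mem, Finset.univ_inter, hα1]
  have e2 : ∑ g, (if g ∈ G₂ then β g else 0) = 1 := by
    rw [Finset.sum_ite_mem, Finset.univ_inter, hβ1]
  have hq1 : ∑ g, q g = 1 := by
    simp only [hqdef]
    rw [Finset.sum_sub_distrib, Finset.sum_add_distrib, ← Finset.mul_sum,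
      ← Finset.mul_sum, e1, e2, hp1]
    ring
  -- evaluate ρ on delta functions
  have hδ : ∀ (g : G) (i : Fin n) (τ : Sigma),
      (∑ h, if geno h i = τ then (if h = g then (1:ℝ) else 0) else 0)
      = if geno g i = τ then 1 else 0 := by
    intro g i τ
    have key : ∀ h, (if geno h i = τ then (if h = g then (1:ℝ) else 0) else 0)
        = if h = g then (if geno g i = τ then 1 else 0) else 0 := by
      intro h
      by_cases hh : h = g <;> simp [hh]
    simp [key]
  have hmarg' : ∀ (i : Fin n) (τ : Sigma),
      (∑ g ∈ G₁, if geno g i = τ then α g else 0)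
      = ∑ g ∈ G₂, if geno g i = τ then β g else 0 := by
    intro i τ
    have h := congrFun (congrFun hmarg i) τ
    simp only [hρ, Finset.sum_apply, Pi.smul_apply, smul_eq_mul] at h
    simp only [hδ, mul_ite, mul_one, mul_zero] at h
    exact h
  have hρq : ρ q = v := by
    rw [hρ]; funext i τ
    have split : ∀ g, (if geno g i = τ then q g else 0)
        = (if geno g i = τ then p g else 0)
          + ε * (if geno g i = τ then (if g ∈ G₁ then α g else 0) else 0)
          - ε * (if geno g i = τ then (if g ∈ G₂ then β g else 0) else 0) := by
      intro g
      by_cases hg : geno g i = τ <;> simp [hg, hqdef]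
    simp only [split]
    rw [Finset.sum_sub_distrib, Finset.sum_add_distrib, ← Finset.mul_sum, ← Finset.mul_sum]
    have swap1 : ∀ g, (if geno g i = τ then (if g ∈ G₁ then α g else 0) else 0)
        = (if g ∈ G₁ then (if geno g i = τ then α g else 0) else 0) := by
      intro g; by_cases hg : g ∈ G₁ <;> by_cases hg' : geno g i = τ <;> simp [hg, hg']
    have swap2 : ∀ g, (if geno g i = τ then (if g ∈ G₂ then β g else 0) else 0)
        = (if g ∈ G₂ then (if geno g i = τ then β g else 0) else 0) := by
      intro g; by_cases hg : g ∈ G₂ <;> by_cases hg' : geno g i = τ <;> simp [hg, hg']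
    simp only [swap1, swap2, Finset.sum_ite_mem, Finset.univ_inter]
    rw [hmarg' i τ]
    have hpvi : (∑ g, if geno g i = τ then p g else 0) = v i τ := by
      have := congrFun (congrFun hpv i) τ
      simpa [hρ] using this
    rw [hpvi]; ring
  have hlt : ∑ g, p g * w g < ∑ g, q g * w g := by
    have expand : ∑ g, q g * w g
        = ∑ g, p g * w g + ε * (∑ g ∈ G₁, α g * w g) - ε * (∑ g ∈ G₂, β g * w g) := by
      simp only [hqdef, sub_mul, add_mul, mul_assoc]
      rw [Finset.sum_sub_distrib, Finset.sum_add_distrib, ← Finset.mul_sum,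
        ← Finset.mul_sum]
      have r1 : ∑ g, (if g ∈ G₁ then α g else 0) * w g = ∑ g ∈ G₁, α g * w g := by
        simp only [ite_mul, zero_mul, Finset.sum_ite_mem, Finset.univ_inter]
      have r2 : ∑ g, (if g ∈ G₂ then β g else 0) * w g = ∑ g ∈ G₂, β g * w g := by
        simp only [ite_mul, zero_mul, Finset.sum_ite_mem, Finset.univ_inter]
      rw [r1, r2]
    rw [expand]
    nlinarith [mul_lt_mul_of_pos_left hcirc hεpos]
  exact absurd (hmax q hq0 hq1 hρq) (not_le.mpr hlt)
end

section
/- For n = 2 binary loci with positive epistasis, i.e., w_{00} + w_{11} − w_{01} − w_{10} > 0, any population p ∈ Δ_{{0,1}^2} that maximizes p · w over its marginalization fiber satisfies p_{01} = 0 or p_{10} = 0; i.e., genotypes 01 and 10 cannot coexist in a fittest population. -/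
/-- For two binary loci with positive epistasis `w₀₀ + w₁₁ − w₀₁ − w₁₀ > 0`, in any
population maximizing mean fitness over its marginalization fiber the genotypes `01`
and `10` cannot coexist. -/
theorem stmt18 (w : Bool → Bool → ℝ)
    (hepi : 0 < w false false + w true true - w false true - w true false)
    (p : Bool → Bool → ℝ)
    (hp0 : ∀ g₁ g₂, 0 ≤ p g₁ g₂) (hp1 : ∑ g₁, ∑ g₂, p g₁ g₂ = 1)
    (hmax : ∀ q : Bool → Bool → ℝ, (∀ g₁ g₂, 0 ≤ q g₁ g₂) → (∑ g₁, ∑ g₂, q g₁ g₂ = 1) →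
      q true false + q true true = p true false + p true true →
      q false true + q true true = p false true + p true true →
      ∑ g₁, ∑ g₂, q g₁ g₂ * w g₁ g₂ ≤ ∑ g₁, ∑ g₂, p g₁ g₂ * w g₁ g₂) :
    p false true = 0 ∨ p true false = 0 := by
  by_contra h
  push_neg at h
  obtain ⟨h01, h10⟩ := h
  have hp01 : 0 < p false true := lt_of_le_of_ne (hp0 _ _) (Ne.symm h01)
  have hp10 : 0 < p true false := lt_of_le_of_ne (hp0 _ _) (Ne.symm h10)
  set ε := min (p false true) (p true false) with hε
  have hεpos : 0 < ε := lt_min hp01 hp10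
  set q : Bool → Bool → ℝ := fun a b => p a b + (if a = b then ε else -ε) with hq
  have hq0 : ∀ g₁ g₂, 0 ≤ q g₁ g₂ := by
    intro g₁ g₂
    cases g₁ <;> cases g₂ <;> simp [hq]
    · linarith [hp0 false false]
    · exact min_le_left _ _
    · exact min_le_right _ _
    · linarith [hp0 true true]
  have hq1 : ∑ g₁, ∑ g₂, q g₁ g₂ = 1 := by
    simp only [hq, Fin.sum_univ_two, Bool.forall_bool] at hp1 ⊢
    simp at hp1 ⊢
    linarith
  have hle := hmax q hq0 hq1 (by simp [hq]; ring) (by simp [hq]; ring)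
  simp only [hq, Fin.sum_univ_two] at hle
  simp at hle
  nlinarith
end
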